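/- arXiv:1105.2516 — 3 statements merged into one kernel-verified Lean document; each statement's English description precedes it below -/
import Mathlib

section
/- Fix integers e ∈ ℤ and m ∈ ℕ, m ≥ 1. For every dyadic interval R in ℝ, the number of dyadic intervals S satisfying |R| = 2^e |S| and m ≤ diam(R ∪ S)/max(|R|,|S|) < m + 1 is at most C·2^{max(e,0)} for an absolute constant C. -/
open Real

structure DyadicI where
  j : ℤ
  k : ℤ

namespace DyadicI

/-- The length `2^j` of a dyadic interval. -/
noncomputable def len (I : DyadicI) : ℝ := (2 : ℝ) ^ I.j

/-- The underlying set `[k·2^j, (k+1)·2^j)` of a dyadic interval. -/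
def toSet (I : DyadicI) : Set ℝ :=
  Set.Ico ((I.k : ℝ) * (2 : ℝ) ^ I.j) (((I.k : ℝ) + 1) * (2 : ℝ) ^ I.j)

/-- The center of a dyadic interval. -/
noncomputable def center (I : DyadicI) : ℝ := ((I.k : ℝ) + 1/2) * (2 : ℝ) ^ I.j

/-- The diameter of the union of two dyadic intervals. -/
noncomputable def diamUnion (I J : DyadicI) : ℝ :=
  max (((I.k : ℝ) + 1) * (2 : ℝ) ^ I.j) (((J.k : ℝ) + 1) * (2 : ℝ) ^ J.j)
    - min ((I.k : ℝ) * (2 : ℝ) ^ I.j) ((J.k : ℝ) * (2 : ℝ) ^ J.j)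

end DyadicI

/-!
Write `M = max(|R|, |S|)`. The diameter of `R ∪ S` is the largest of `|R|`, `|S|` and the two
spans `right S - left R`, `right R - left S`, and these spans sum to `|R| + |S| ≥ 0`. Hence if the
diameter lies in `[mM, (m+1)M)`, one of the spans lies in `[(m-1)M, (m+1)M)`. All admissible `S`
have the same length `|S| = 2^{-e}|R|`, so `M = 2^{max(e,0)}|S|`, and each span moves in steps of
`|S|` as `S` varies: each span allows at most `2·2^{max(e,0)}` intervals, whence `C = 4`.
-/

theorem sub_mem_Ico_or_sub_mem_Ico_of_max_sub_min_mem_Ico {a b v u M m : ℝ}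
    (hab : a ≤ b) (hvu : v ≤ u) (hbaM : b - a ≤ M) (huvM : u - v ≤ M)
    (h : max b u - min a v ∈ Set.Ico (m * M) ((m + 1) * M)) :
    u - a ∈ Set.Ico ((m - 1) * M) ((m + 1) * M) ∨
      b - v ∈ Set.Ico ((m - 1) * M) ((m + 1) * M) := by
  obtain ⟨hlo, hhi⟩ := h
  have hua : u - a < (m + 1) * M := by
    linarith [le_max_right b u, min_le_left a v]
  have hbv : b - v < (m + 1) * M := by
    linarith [le_max_left b u, min_le_right a v]
  -- if one interval contains the other, then `m * M ≤ M`, so `(m - 1) * M ≤ 0`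
  rcases le_total b u with hbu | hub <;> rcases le_total a v with hav | hva
  · rw [max_eq_right hbu, min_eq_left hav] at hlo
    exact Or.inl ⟨by nlinarith, hua⟩
  · rw [max_eq_right hbu, min_eq_right hva] at hlo
    exact Or.inl ⟨by nlinarith, hua⟩
  · rw [max_eq_left hub, min_eq_left hav] at hlo
    exact Or.inl ⟨by nlinarith, hua⟩
  · rw [max_eq_left hub, min_eq_right hva] at hlo
    exact Or.inr ⟨by nlinarith, hbv⟩

theorem Int.setOf_mul_add_mem_Ico_eq {s : ℝ} (hs : 0 < s) (c x : ℝ) (n : ℕ) :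
    {k : ℤ | k * s + c ∈ Set.Ico x (x + n * s)} =
      ↑(Finset.Ico ⌈(x - c) / s⌉ (⌈(x - c) / s⌉ + n)) := by
  ext k
  have hlo : x ≤ k * s + c ↔ ⌈(x - c) / s⌉ ≤ k := by
    rw [Int.ceil_le, div_le_iff₀ hs]; constructor <;> intro <;> linarith
  have hhi : k * s + c < x + n * s ↔ k < ⌈(x - c) / s⌉ + n := by
    rw [← sub_lt_iff_lt_add (a := k), Int.lt_ceil, lt_div_iff₀ hs]; push_cast
    constructor <;> intro <;> linarith
  simp only [Set.mem_ofPred_eq, Set.mem_Ico, Finset.coe_Ico, hlo, hhi]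

theorem max_two_zpow_add_eq (j e : ℤ) :
    max ((2 : ℝ) ^ (j + e)) (2 ^ j) = 2 ^ j * 2 ^ (max e 0) := by
  rw [← zpow_add₀ two_ne_zero, add_max, add_zero]
  exact (Monotone.map_max (zpow_right_mono₀ one_le_two)).symm

namespace DyadicI

noncomputable def left (I : DyadicI) : ℝ := I.k * 2 ^ I.j

noncomputable def right (I : DyadicI) : ℝ := (I.k + 1) * 2 ^ I.j

theorem diamUnion_eq (I J : DyadicI) :
    I.diamUnion J = max I.right J.right - min I.left J.left := rfl

theorem right_sub_left (I : DyadicI) : I.right - I.left = I.len := by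
  simp only [right, left, len]; ring

theorem left_le_right (I : DyadicI) : I.left ≤ I.right := by
  have : 0 < I.len := zpow_pos two_pos I.j
  linarith [I.right_sub_left]

theorem j_eq_of_len_eq_two_zpow_mul {R S : DyadicI} {e : ℤ}
    (h : R.len = (2 : ℝ) ^ e * S.len) : S.j = R.j - e := by
  rw [len, len, ← zpow_add₀ two_ne_zero] at h
  have := zpow_right_injective₀ two_pos (by norm_num : (2 : ℝ) ≠ 1) h
  omega

theorem span_mem_Ico {R S : DyadicI} {m : ℝ}
    (h : R.diamUnion S / max R.len S.len ∈ Set.Ico m (m + 1)) :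
    S.right - R.left ∈ Set.Ico ((m - 1) * max R.len S.len) ((m + 1) * max R.len S.len) ∨
      R.right - S.left ∈ Set.Ico ((m - 1) * max R.len S.len) ((m + 1) * max R.len S.len) := by
  have hM : 0 < max R.len S.len := lt_max_of_lt_left (zpow_pos two_pos R.j)
  rw [Set.mem_Ico, le_div_iff₀ hM, div_lt_iff₀ hM, diamUnion_eq] at h
  exact sub_mem_Ico_or_sub_mem_Ico_of_max_sub_min_mem_Ico R.left_le_right S.left_le_right
    (R.right_sub_left ▸ le_max_left _ _) (S.right_sub_left ▸ le_max_right _ _) h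

theorem mem_image_mk_of_diamUnion_div_mem_Ico {R S : DyadicI} {e : ℤ} {m s : ℝ} {N : ℕ}
    (hs : s = 2 ^ (R.j - e)) (hN : (N : ℝ) = 2 ^ max e 0) (hlen : R.len = 2 ^ e * S.len)
    (hdiam : R.diamUnion S / max R.len S.len ∈ Set.Ico m (m + 1)) :
    S ∈ mk (R.j - e) ''
      ({k : ℤ | k * s + (s - R.left) ∈
          Set.Ico ((m - 1) * (s * N)) ((m - 1) * (s * N) + ↑(2 * N) * s)} ∪
        -{k : ℤ | k * s + R.right ∈
          Set.Ico ((m - 1) * (s * N)) ((m - 1) * (s * N) + ↑(2 * N) * s)}) := by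
  have hj := j_eq_of_len_eq_two_zpow_mul hlen
  have hM : max R.len S.len = s * N := by
    rw [hs, hN, len, len, hj, ← max_two_zpow_add_eq, sub_add_cancel]
  have hwindow : (m + 1) * (s * N) = (m - 1) * (s * N) + ↑(2 * N) * s := by push_cast; ring
  refine ⟨S.k, ?_, by rw [← hj]⟩
  rcases span_mem_Ico hdiam with h | h <;> rw [hM, hwindow] at h
  · left
    show (S.k : ℝ) * s + (s - R.left) ∈ Set.Ico _ _
    convert h using 2
    simp only [right, hj, hs]; ring
  · right
    rw [Set.mem_neg]
    show ((-S.k : ℤ) : ℝ) * s + R.right ∈ Set.Ico _ _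
    convert h using 2
    simp only [left, hj, hs]; push_cast; ring

end DyadicI

/-- for fixed eccentricity `e` and relative distance `m ≥ 1`, the number of dyadic
intervals `S` with `|R| = 2^e|S|` and `m ≤ diam(R∪S)/max(|R|,|S|) < m+1` is at most
`C·2^{max(e,0)}`. -/
theorem statement3 :
    ∃ C : ℝ, 0 < C ∧ ∀ (e : ℤ) (m : ℕ), 1 ≤ m → ∀ R : DyadicI,
      {S : DyadicI | R.len = (2 : ℝ) ^ e * S.len ∧
          (m : ℝ) ≤ R.diamUnion S / max R.len S.len ∧
          R.diamUnion S / max R.len S.len < (m : ℝ) + 1}.Finite ∧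
      ({S : DyadicI | R.len = (2 : ℝ) ^ e * S.len ∧
          (m : ℝ) ≤ R.diamUnion S / max R.len S.len ∧
          R.diamUnion S / max R.len S.len < (m : ℝ) + 1}.ncard : ℝ) ≤
        C * (2 : ℝ) ^ (max e 0) := by
  refine ⟨4, by norm_num, fun e m _ R => ?_⟩
  set N : ℕ := 2 ^ (max e 0).toNat
  have hN : (N : ℝ) = 2 ^ (max e 0) := by
    rw [Nat.cast_pow, Nat.cast_ofNat, ← zpow_natCast, Int.toNat_of_nonneg (le_max_right e 0)]
  set s : ℝ := 2 ^ (R.j - e)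
  have hs : 0 < s := zpow_pos two_pos _
  set I := Set.Ico (((m : ℝ) - 1) * (s * N)) (((m : ℝ) - 1) * (s * N) + ↑(2 * N) * s)
  set T₁ := {k : ℤ | k * s + (s - R.left) ∈ I}
  set T₂ := {k : ℤ | k * s + R.right ∈ I}
  have hT₁ : T₁ = _ := Int.setOf_mul_add_mem_Ico_eq hs _ _ _
  have hT₂ : T₂ = _ := Int.setOf_mul_add_mem_Ico_eq hs _ _ _
  have hfin : (T₁ ∪ -T₂).Finite := by
    rw [hT₁, hT₂]; exact (Finset.finite_toSet _).union (Finset.finite_toSet _).neg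
  have hcard : (T₁ ∪ -T₂).ncard ≤ 4 * N := by
    calc (T₁ ∪ -T₂).ncard ≤ T₁.ncard + T₂.ncard := by
          rw [← Set.ncard_neg T₂]; exact Set.ncard_union_le _ _
      _ = 4 * N := by
          rw [hT₁, hT₂, Set.ncard_coe_finset, Set.ncard_coe_finset, Int.card_Ico, Int.card_Ico]
          omega
  have hsub : {S : DyadicI | R.len = (2 : ℝ) ^ e * S.len ∧
      (m : ℝ) ≤ R.diamUnion S / max R.len S.len ∧
      R.diamUnion S / max R.len S.len < (m : ℝ) + 1} ⊆
        DyadicI.mk (R.j - e) '' (T₁ ∪ -T₂) :=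
    fun S ⟨hlen, hdiam⟩ => DyadicI.mem_image_mk_of_diamUnion_div_mem_Ico rfl hN hlen hdiam
  refine ⟨(hfin.image _).subset hsub, ?_⟩
  rw [← hN]
  exact_mod_cast (Set.ncard_le_ncard hsub (hfin.image _)).trans
    ((Set.ncard_image_le hfin).trans hcard)
end

section
/- Let f : ℝ → ℂ be integrable, supported in a bounded interval I' ⊂ ℝ, with ∫ f = 0. For each dyadic interval I, let φ_I be an L²-normalized bump adapted to I of order N ≥ 3 with constant 1: |φ_I^{(n)}(x)| ≤ |I|^{-1/2−n}(1+|I|^{-1}|x−c(I)|)^{-N} for n ≤ N. Then ∑_{I dyadic, I ⊄ 3I'} |⟨f, φ_I⟩| · |I|^{1/2} ≤ C_N ‖f‖_{L¹}, where 3I' is the interval with the same center as I' and length 3|I'|. -/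
open Real MeasureTheory

section Aux

lemma psum (M : ℕ) : ∑ n ∈ Finset.range (M+1), (((1:ℝ)+n)^2)⁻¹ ≤ 2 - ((M:ℝ)+1)⁻¹ := by
  induction M with
  | zero => norm_num
  | succ m ih =>
    rw [Finset.sum_range_succ]
    have h1 : (((1:ℝ)+(m+1))^2)⁻¹ ≤ ((m:ℝ)+1)⁻¹ - ((m:ℝ)+2)⁻¹ := by
      have hm : (0:ℝ) < (m:ℝ)+1 := by positivity
      have hm2 : (0:ℝ) < (m:ℝ)+2 := by positivity
      have key : ((m:ℝ)+1)⁻¹ - ((m:ℝ)+2)⁻¹ = (((m:ℝ)+1)*((m:ℝ)+2))⁻¹ := by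
        field_simp
        ring
      rw [key]
      apply inv_anti₀ (by positivity)
      nlinarith
    push_cast
    push_cast at ih h1
    have e2 : ((m:ℝ)+1+1)⁻¹ = ((m:ℝ)+2)⁻¹ := by ring_nf
    linarith

lemma natSummable : Summable (fun n : ℕ => (((1:ℝ)+n)^2)⁻¹) := by
  have := Real.summable_one_div_nat_pow (p := 2) |>.mpr one_lt_two
  have h2 := (summable_nat_add_iff 1).mpr this
  refine h2.congr fun n => ?_
  push_cast
  rw [one_div]
  ring_nf

lemma natTsum : ∑' n : ℕ, (((1:ℝ)+n)^2)⁻¹ ≤ 2 := by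
  refine natSummable.tsum_le_of_sum_le fun s => ?_
  obtain ⟨M, hM⟩ := s.exists_nat_subset_range
  have hM2 : s ⊆ Finset.range (M+1) := hM.trans (Finset.range_subset_range.mpr (Nat.le_succ M))
  calc ∑ n ∈ s, (((1:ℝ)+n)^2)⁻¹ ≤ ∑ n ∈ Finset.range (M+1), (((1:ℝ)+n)^2)⁻¹ :=
        Finset.sum_le_sum_of_subset_of_nonneg hM2 (fun i _ _ => by positivity)
    _ ≤ 2 - ((M:ℝ)+1)⁻¹ := psum M
    _ ≤ 2 := by
        have h0 : (0:ℝ) ≤ ((M:ℝ)+1)⁻¹ := by positivity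
        linarith


noncomputable def cf (m : ℤ) : ℝ := ((1+|(m:ℝ)|)^2)⁻¹

lemma cf_nonneg (m : ℤ) : 0 ≤ cf m := by unfold cf; positivity

lemma cf_neg_eval (n : ℕ) : cf (-(n+1)) = ((1+((n:ℝ)+1))^2)⁻¹ := by
  unfold cf
  push_cast
  rw [abs_of_nonpos (by linarith [(n.cast_nonneg : (0:ℝ) ≤ n)] : (-((n:ℝ)+1)) ≤ 0)]
  ring_nf

lemma cf_nat : (Summable fun n : ℕ => cf n) ∧ (Summable fun n : ℕ => cf (-(n+1))) := by
  constructor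
  · exact natSummable.congr fun n => by simp [cf]
  · refine natSummable.of_nonneg_of_le (fun n => cf_nonneg _) (fun n => ?_)
    rw [cf_neg_eval]
    apply inv_anti₀ (by positivity)
    have : (0:ℝ) ≤ (n:ℝ) := n.cast_nonneg
    nlinarith

lemma cfSummable : Summable cf := Summable.of_nat_of_neg_add_one cf_nat.1 cf_nat.2

lemma cfTsum : ∑' m : ℤ, cf m ≤ 4 := by
  rw [tsum_of_nat_of_neg_add_one cf_nat.1 cf_nat.2]
  have h1 : ∑' n : ℕ, cf n ≤ 2 := by
    calc ∑' n : ℕ, cf n = ∑' n : ℕ, (((1:ℝ)+n)^2)⁻¹ := tsum_congr fun n => by simp [cf]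
      _ ≤ 2 := natTsum
  have h2 : ∑' n : ℕ, cf (-(n+1)) ≤ 2 := by
    calc ∑' n : ℕ, cf (-(n+1)) ≤ ∑' n : ℕ, (((1:ℝ)+n)^2)⁻¹ := by
          apply Summable.tsum_le_tsum _ cf_nat.2 natSummable
          intro n
          rw [cf_neg_eval]
          apply inv_anti₀ (by positivity)
          have : (0:ℝ) ≤ (n:ℝ) := n.cast_nonneg
          nlinarith
      _ ≤ 2 := natTsum
  linarith

lemma cf_shift_summable (k₀ : ℤ) : Summable (fun k : ℤ => cf (k - k₀)) :=
  cfSummable.comp_injective (sub_left_injective (b := k₀))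

lemma cf_shift_tsum (k₀ : ℤ) : ∑' k : ℤ, cf (k - k₀) = ∑' m : ℤ, cf m :=
  Equiv.tsum_eq (Equiv.subRight k₀) cf

/-- shifted power-decay sum over ℤ -/
lemma intSummable_theta (θ : ℝ) :
    Summable (fun k : ℤ => ((1+|(k:ℝ)+θ|)^2)⁻¹) ∧
    ∑' k : ℤ, ((1+|(k:ℝ)+θ|)^2)⁻¹ ≤ 16 := by
  set k₀ : ℤ := round (-θ) with hk0
  have key : ∀ k : ℤ, ((1+|(k:ℝ)+θ|)^2)⁻¹ ≤ 4 * cf (k - k₀) := by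
    intro k
    have hr : |(-θ) - (k₀:ℝ)| ≤ 1/2 := abs_sub_round _
    have h1 : |((k - k₀ : ℤ):ℝ)| ≤ |(k:ℝ)+θ| + 1/2 := by
      push_cast
      calc |(k:ℝ) - k₀| = |((k:ℝ)+θ) + ((-θ) - k₀)| := by ring_nf
        _ ≤ |(k:ℝ)+θ| + |(-θ) - (k₀:ℝ)| := abs_add_le _ _
        _ ≤ |(k:ℝ)+θ| + 1/2 := by linarith
    have h2 : (1+|((k-k₀:ℤ):ℝ)|) ≤ 2*(1+|(k:ℝ)+θ|) := by
      have := abs_nonneg ((k:ℝ)+θ)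
      linarith
    have h3 : 4 * cf (k-k₀) = ((((1:ℝ)+|((k-k₀:ℤ):ℝ)|)/2)^2)⁻¹ := by
      unfold cf
      field_simp
      ring
    rw [h3]
    apply inv_anti₀ (by positivity)
    have ha := abs_nonneg ((k:ℝ)+θ)
    have hb := abs_nonneg (((k-k₀:ℤ):ℝ))
    nlinarith
  have hs : Summable (fun k : ℤ => 4 * cf (k - k₀)) := (cf_shift_summable k₀).mul_left 4
  constructor
  · exact Summable.of_nonneg_of_le (fun k => by positivity) key hs
  · calc ∑' k : ℤ, ((1+|(k:ℝ)+θ|)^2)⁻¹ ≤ ∑' k : ℤ, 4 * cf (k - k₀) :=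
          Summable.tsum_le_tsum key (Summable.of_nonneg_of_le (fun k => by positivity) key hs) hs
      _ = 4 * ∑' k : ℤ, cf (k - k₀) := tsum_mul_left
      _ = 4 * ∑' m : ℤ, cf m := by rw [cf_shift_tsum]
      _ ≤ 16 := by linarith [cfTsum]

noncomputable def cg (m : ℤ) : ℝ := ((2:ℝ)^m.natAbs)⁻¹

lemma cg_nonneg (m : ℤ) : 0 ≤ cg m := by unfold cg; positivity

lemma cg_nat_hasSum : HasSum (fun n : ℕ => cg n) 2 := by
  refine hasSum_geometric_two.congr_fun fun n => ?_
  unfold cg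
  rw [Int.natAbs_natCast, one_div, inv_pow]

lemma cg_neg_hasSum : HasSum (fun n : ℕ => cg (-(n+1))) 1 := by
  have h := hasSum_geometric_two.mul_left (1/2 : ℝ)
  norm_num at h
  refine h.congr_fun fun n => ?_
  unfold cg
  have hna : ((-((n:ℤ)+1))).natAbs = n + 1 := by omega
  rw [hna, pow_succ, one_div, inv_pow, mul_inv]
  ring

lemma cgSummable : Summable cg :=
  Summable.of_nat_of_neg_add_one cg_nat_hasSum.summable cg_neg_hasSum.summable

lemma cgTsum : ∑' m : ℤ, cg m ≤ 3 := by
  rw [tsum_of_nat_of_neg_add_one cg_nat_hasSum.summable cg_neg_hasSum.summable,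
    cg_nat_hasSum.tsum_eq, cg_neg_hasSum.tsum_eq]
  norm_num

lemma cg_shift_summable (j₀ : ℤ) : Summable (fun j : ℤ => cg (j - j₀)) :=
  cgSummable.comp_injective (sub_left_injective (b := j₀))

lemma cg_shift_tsum (j₀ : ℤ) : ∑' j : ℤ, cg (j - j₀) = ∑' m : ℤ, cg m :=
  Equiv.tsum_eq (Equiv.subRight j₀) cg

lemma min_le_cg (L' : ℝ) (hL' : 0 < L') (j : ℤ) :
    min (L' * ((2:ℝ)^j)⁻¹) ((2:ℝ)^j / L') ≤ 2 * cg (j - ⌊Real.logb 2 L'⌋) := by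
  set j₀ : ℤ := ⌊Real.logb 2 L'⌋ with hj0
  have hlow : (2:ℝ)^j₀ ≤ L' := by
    have h : ((2:ℝ)^(j₀:ℝ) : ℝ) ≤ (2:ℝ)^(Real.logb 2 L') :=
      Real.rpow_le_rpow_of_exponent_le (by norm_num) (Int.floor_le _)
    rwa [Real.rpow_logb two_pos (by norm_num) hL', Real.rpow_intCast] at h
  have hhigh : L' ≤ (2:ℝ)^(j₀+1) := by
    have h : ((2:ℝ)^(Real.logb 2 L') : ℝ) ≤ (2:ℝ)^((j₀+1:ℤ):ℝ) := by
      apply Real.rpow_le_rpow_of_exponent_le (by norm_num)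
      push_cast
      linarith [Int.lt_floor_add_one (Real.logb 2 L')]
    rwa [Real.rpow_logb two_pos (by norm_num) hL', Real.rpow_intCast] at h
  have hjpos : (0:ℝ) < (2:ℝ)^j := zpow_pos (by norm_num) j
  have hj0pos : (0:ℝ) < (2:ℝ)^j₀ := zpow_pos (by norm_num) j₀
  rcases le_or_gt j j₀ with h | h
  · have hna : (j - j₀).natAbs = (j₀ - j).toNat := by omega
    have hcg : cg (j - j₀) = (2:ℝ)^j / (2:ℝ)^j₀ := by
      unfold cg
      rw [hna, ← zpow_natCast, Int.toNat_of_nonneg (by omega), ← zpow_neg, neg_sub,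
        zpow_sub₀ (by norm_num)]
    calc min (L' * ((2:ℝ)^j)⁻¹) ((2:ℝ)^j / L') ≤ (2:ℝ)^j / L' := min_le_right _ _
      _ ≤ (2:ℝ)^j / (2:ℝ)^j₀ := by
          apply div_le_div_of_nonneg_left hjpos.le hj0pos hlow
      _ ≤ 2 * cg (j - j₀) := by rw [hcg]; nlinarith [div_pos hjpos hj0pos]
  · have hna : (j - j₀).natAbs = (j - j₀).toNat := by omega
    have hcg : cg (j - j₀) = (2:ℝ)^j₀ / (2:ℝ)^j := by
      unfold cg
      rw [hna, ← zpow_natCast, Int.toNat_of_nonneg (by omega), ← zpow_neg, neg_sub,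
        zpow_sub₀ (by norm_num)]
    calc min (L' * ((2:ℝ)^j)⁻¹) ((2:ℝ)^j / L') ≤ L' * ((2:ℝ)^j)⁻¹ := min_le_left _ _
      _ ≤ (2:ℝ)^(j₀+1) * ((2:ℝ)^j)⁻¹ := by
          apply mul_le_mul_of_nonneg_right hhigh (by positivity)
      _ = 2 * cg (j - j₀) := by
          rw [hcg, zpow_add₀ (by norm_num : (2:ℝ) ≠ 0)]
          ring

lemma core_int (f : ℝ → ℂ) (hf : Integrable f) (ψ : ℝ → ℝ) (B : ℝ) (hB : 0 ≤ B)
    (h : ∀ x, f x ≠ 0 → |ψ x| ≤ B) :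
    ‖∫ x, f x * ((ψ x : ℝ) : ℂ)‖ ≤ B * ∫ x, ‖f x‖ := by
  calc ‖∫ x, f x * ((ψ x : ℝ) : ℂ)‖ ≤ ∫ x, ‖f x * ((ψ x : ℝ) : ℂ)‖ :=
        norm_integral_le_integral_norm _
    _ ≤ ∫ x, B * ‖f x‖ := by
        apply integral_mono_of_nonneg (Filter.Eventually.of_forall fun x => norm_nonneg _)
          (hf.norm.const_mul B) (Filter.Eventually.of_forall fun x => ?_)
        by_cases hx : f x = 0
        · simp [hx]
        · simp only []
          rw [norm_mul, Complex.norm_real, Real.norm_eq_abs, mul_comm]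
          exact mul_le_mul_of_nonneg_right (h x hx) (norm_nonneg _)
    _ = B * ∫ x, ‖f x‖ := integral_const_mul B _

lemma rpow_negNat (b : ℝ) (hb : 0 < b) (n : ℕ) : b ^ (-(n:ℝ)) = (b ^ n)⁻¹ := by
  rw [← Real.rpow_natCast b n, ← Real.rpow_neg hb.le]

set_option maxHeartbeats 1600000 in
lemma term_bound (N : ℕ) (hN : 3 ≤ N) (f : ℝ → ℂ) (c' L' : ℝ) (hL' : 0 < L')
    (hf : Integrable f)
    (hsupp : Function.support f ⊆ Set.Icc (c' - L' / 2) (c' + L' / 2))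
    (hmean : (∫ x, f x) = 0)
    (φ : ℝ → ℝ) (hφ : ContDiff ℝ (⊤ : ℕ∞) φ)
    (l cI : ℝ) (hl : 0 < l)
    (hbd : ∀ n ≤ N, ∀ x : ℝ,
      |iteratedDeriv n φ x| ≤ l ^ (-(1/2 : ℝ) - (n : ℝ)) * (1 + l⁻¹ * |x - cI|) ^ (-(N : ℝ)))
    (hcase : L'/2 ≤ l ∨ (l ≤ L'/2 ∧ L' ≤ |cI - c'|)) :
    ‖∫ x, f x * ((φ x : ℝ) : ℂ)‖ * Real.sqrt l ≤
      2^(N+1) * min (L' * l⁻¹) (l / L') * ((1 + l⁻¹ * |cI - c'|) ^ (N-1))⁻¹ * ∫ x, ‖f x‖ := by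
  set D := |cI - c'| with hD
  set v := 1 + l⁻¹ * D with hv
  set A := ∫ x, ‖f x‖ with hA
  have hA0 : 0 ≤ A := integral_nonneg fun x => norm_nonneg _
  have hl1 : 0 < l⁻¹ := inv_pos.mpr hl
  have hD0 : 0 ≤ D := abs_nonneg _
  have hv1 : 1 ≤ v := by
    have h0 : 0 ≤ l⁻¹ * D := mul_nonneg hl1.le hD0
    rw [hv]; linarith
  have hv0 : 0 < v := lt_of_lt_of_le one_pos hv1
  -- the shift estimate
  have shift : ∀ x ∈ Set.Icc (c' - L'/2) (c' + L'/2), v ≤ 2 * (1 + l⁻¹ * |x - cI|) := by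
    intro x hx
    obtain ⟨hx1, hx2⟩ := hx
    have hxc : |x - c'| ≤ L'/2 := abs_le.mpr ⟨by linarith, by linarith⟩
    have htri : D ≤ |x - cI| + |x - c'| := by
      rw [hD]
      calc |cI - c'| ≤ |cI - x| + |x - c'| := abs_sub_le _ _ _
        _ = |x - cI| + |x - c'| := by rw [abs_sub_comm]
    have hxn : 0 ≤ |x - cI| := abs_nonneg _
    rcases hcase with h | ⟨h1, h2⟩
    · have : l⁻¹ * (L'/2) ≤ 1 := by
        rw [inv_mul_le_iff₀ hl]
        linarith
      have : l⁻¹ * D ≤ l⁻¹ * |x - cI| + l⁻¹ * (L'/2) := by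
        have := mul_le_mul_of_nonneg_left htri hl1.le
        have h2 := mul_le_mul_of_nonneg_left hxc hl1.le
        nlinarith
      nlinarith
    · -- L' ≤ D : |x - cI| ≥ D - L'/2 ≥ D/2
      have h3 : D - L'/2 ≤ |x - cI| := by linarith
      have h4 : D/2 ≤ |x - cI| := by linarith
      have := mul_le_mul_of_nonneg_left h4 hl1.le
      nlinarith
  -- pointwise decay transfer
  have decay : ∀ x ∈ Set.Icc (c' - L'/2) (c' + L'/2),
      ((1 + l⁻¹ * |x - cI|) ^ (-(N:ℝ))) ≤ 2^N * (v^N)⁻¹ := by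
    intro x hx
    have hu1 : (1:ℝ) ≤ 1 + l⁻¹ * |x - cI| := by
      have := abs_nonneg (x - cI); nlinarith
    have hu0 : (0:ℝ) < 1 + l⁻¹ * |x - cI| := lt_of_lt_of_le one_pos hu1
    rw [rpow_negNat _ hu0 N]
    have hvu : v ^ N ≤ (2 * (1 + l⁻¹ * |x - cI|)) ^ N :=
      pow_le_pow_left₀ hv0.le (shift x hx) N
    have key : (((1 + l⁻¹ * |x - cI|)) ^ N)⁻¹ = 2^N * ((2 * (1 + l⁻¹ * |x - cI|)) ^ N)⁻¹ := by
      rw [mul_pow]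
      field_simp
    rw [key]
    exact mul_le_mul_of_nonneg_left (inv_anti₀ (by positivity) hvu) (by positivity)
  have hsqrt : Real.sqrt l = l ^ ((1:ℝ)/2) := Real.sqrt_eq_rpow l
  have hs0 : 0 ≤ Real.sqrt l := Real.sqrt_nonneg l
  have hmin0 : 0 ≤ min (L' * l⁻¹) (l / L') := le_min (by positivity) (by positivity)
  have hZpos : (0:ℝ) < (v ^ (N-1))⁻¹ := by positivity
  have hpowinv : (v ^ N)⁻¹ ≤ (v ^ (N-1))⁻¹ := by
    apply inv_anti₀ (by positivity)
    exact pow_le_pow_right₀ hv1 (Nat.sub_le N 1)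
  rcases hcase with hlarge | ⟨h1, h2⟩
  · -- LARGE SCALE : use mean zero
    have hu1 : ∀ x : ℝ, (1:ℝ) ≤ 1 + l⁻¹ * |x - cI| := fun x => by
      have h0 : 0 ≤ l⁻¹ * |x - cI| := mul_nonneg hl1.le (abs_nonneg _)
      linarith
    -- integrability of f * φ
    have hφc : Continuous φ := hφ.continuous
    have hbdφ : ∀ x : ℝ, ‖((φ x : ℝ):ℂ)‖ ≤ l ^ (-(1/2:ℝ)) := by
      intro x
      rw [Complex.norm_real, Real.norm_eq_abs]
      have h := hbd 0 (Nat.zero_le N) x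
      rw [iteratedDeriv_zero] at h
      have h2 : ((1:ℝ) + l⁻¹ * |x - cI|) ^ (-(N:ℝ)) ≤ 1 :=
        Real.rpow_le_one_of_one_le_of_nonpos (hu1 x) (neg_nonpos.mpr (Nat.cast_nonneg N))
      calc |φ x| ≤ l ^ (-(1/2:ℝ) - ((0:ℕ):ℝ)) * (1 + l⁻¹ * |x - cI|) ^ (-(N:ℝ)) := h
        _ ≤ l ^ (-(1/2:ℝ) - ((0:ℕ):ℝ)) * 1 := by
            apply mul_le_mul_of_nonneg_left h2 (by positivity)
        _ = l ^ (-(1/2:ℝ)) := by norm_num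
    have hint1 : Integrable (fun x => f x * ((φ x : ℝ):ℂ)) := by
      refine (Integrable.bdd_mul hf ?_ (Filter.Eventually.of_forall hbdφ)).congr
        (Filter.Eventually.of_forall fun x => mul_comm _ _)
      exact (Complex.continuous_ofReal.comp hφc).aestronglyMeasurable
    have hint2 : Integrable (fun x => f x * ((φ c' : ℝ):ℂ)) := hf.mul_const _
    have hrw : (∫ x, f x * ((φ x : ℝ):ℂ)) = ∫ x, f x * (((φ x - φ c' : ℝ)):ℂ) := by
      have : (∫ x, f x * (((φ x - φ c' : ℝ)):ℂ))
          = (∫ x, f x * ((φ x : ℝ):ℂ)) - (∫ x, f x) * ((φ c' : ℝ):ℂ) := by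
        rw [← integral_mul_const]
        rw [← integral_sub hint1 hint2]
        congr 1
        ext x
        push_cast
        ring
      rw [this, hmean, zero_mul, sub_zero]
    -- derivative bound
    set M : ℝ := l ^ (-(1/2:ℝ) - (1:ℝ)) * (2^N * (v^N)⁻¹) with hM
    have hM0 : 0 ≤ M := by positivity
    have hder : ∀ y ∈ Set.Icc (c' - L'/2) (c' + L'/2), ‖deriv φ y‖ ≤ M := by
      intro y hy
      rw [Real.norm_eq_abs]
      have h := hbd 1 (by omega) y
      rw [iteratedDeriv_one] at h
      calc |deriv φ y| ≤ l ^ (-(1/2:ℝ) - ((1:ℕ):ℝ)) * (1 + l⁻¹ * |y - cI|) ^ (-(N:ℝ)) := h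
        _ ≤ l ^ (-(1/2:ℝ) - ((1:ℕ):ℝ)) * (2^N * (v^N)⁻¹) :=
            mul_le_mul_of_nonneg_left (decay y hy) (by positivity)
        _ = M := by rw [hM]; norm_num
    have hc'mem : c' ∈ Set.Icc (c' - L'/2) (c' + L'/2) := by
      constructor <;> [linarith; linarith]
    have hmvt : ∀ x, f x ≠ 0 → |φ x - φ c'| ≤ M * (L'/2) := by
      intro x hx
      have hxmem := hsupp (Function.mem_support.mpr hx)
      have := Convex.norm_image_sub_le_of_norm_deriv_le
        (fun y _ => (hφ.differentiable (by simp)) y) hder (convex_Icc _ _) hc'mem hxmem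
      rw [Real.norm_eq_abs, Real.norm_eq_abs] at this
      have hxc : |x - c'| ≤ L'/2 := by
        obtain ⟨ha, hb⟩ := hxmem
        exact abs_le.mpr ⟨by linarith, by linarith⟩
      calc |φ x - φ c'| ≤ M * |x - c'| := this
        _ ≤ M * (L'/2) := mul_le_mul_of_nonneg_left hxc hM0
    have hcore := core_int f hf (fun x => φ x - φ c') (M * (L'/2)) (by positivity) hmvt
    rw [← hrw] at hcore
    -- now multiply by sqrt l and compute
    have hstep : ‖∫ x, f x * ((φ x : ℝ):ℂ)‖ * Real.sqrt l ≤ M * (L'/2) * A * Real.sqrt l :=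
      mul_le_mul_of_nonneg_right hcore hs0
    have hsl : Real.sqrt l * l ^ (-(1/2:ℝ) - (1:ℝ)) = l⁻¹ := by
      rw [hsqrt, ← Real.rpow_add hl]
      norm_num
      rw [Real.rpow_neg hl.le, Real.rpow_one]
    have heq : M * (L'/2) * A * Real.sqrt l = 2^N * ((L'/2) * l⁻¹) * (v^N)⁻¹ * A := by
      rw [hM]
      rw [show M * (L'/2) * A * Real.sqrt l
          = (Real.sqrt l * l ^ (-(1/2:ℝ) - (1:ℝ))) * (L'/2) * (2^N * (v^N)⁻¹) * A by rw [hM]; ring]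
      rw [hsl]
      ring
    have hminb : (L'/2) * l⁻¹ ≤ 2 * min (L' * l⁻¹) (l / L') := by
      rcases le_total (L' * l⁻¹) (l / L') with h | h
      · rw [min_eq_left h]
        nlinarith
      · rw [min_eq_right h]
        have e1 : L'/2 * l⁻¹ = L' / (2*l) := by field_simp
        have e2 : 2 * (l / L') = 2*l / L' := by ring
        rw [e1, e2, div_le_div_iff₀ (by positivity) hL']
        nlinarith
    calc ‖∫ x, f x * ((φ x : ℝ):ℂ)‖ * Real.sqrt l ≤ M * (L'/2) * A * Real.sqrt l := hstep
      _ = 2^N * ((L'/2) * l⁻¹) * (v^N)⁻¹ * A := heq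
      _ ≤ 2^N * (2 * min (L' * l⁻¹) (l / L')) * (v^(N-1))⁻¹ * A := by
          gcongr
      _ = 2^(N+1) * min (L' * l⁻¹) (l / L') * (v^(N-1))⁻¹ * A := by ring
  · -- SMALL SCALE
    set B : ℝ := l ^ (-(1/2:ℝ)) * (2^N * (v^N)⁻¹) with hBdef
    have hBf : ∀ x, f x ≠ 0 → |φ x| ≤ B := by
      intro x hx
      have hxmem := hsupp (Function.mem_support.mpr hx)
      have h := hbd 0 (Nat.zero_le N) x
      rw [iteratedDeriv_zero] at h
      calc |φ x| ≤ l ^ (-(1/2:ℝ) - ((0:ℕ):ℝ)) * (1 + l⁻¹ * |x - cI|) ^ (-(N:ℝ)) := h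
        _ ≤ l ^ (-(1/2:ℝ) - ((0:ℕ):ℝ)) * (2^N * (v^N)⁻¹) :=
            mul_le_mul_of_nonneg_left (decay x hxmem) (by positivity)
        _ = B := by rw [hBdef]; norm_num
    have hcore := core_int f hf φ B (by positivity) hBf
    have hstep : ‖∫ x, f x * ((φ x : ℝ):ℂ)‖ * Real.sqrt l ≤ B * A * Real.sqrt l :=
      mul_le_mul_of_nonneg_right hcore hs0
    have hsl1 : Real.sqrt l * l ^ (-(1/2:ℝ)) = 1 := by
      rw [hsqrt, ← Real.rpow_add hl]
      norm_num
    have heq : B * A * Real.sqrt l = 2^N * (v^N)⁻¹ * A := by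
      rw [hBdef]
      rw [show l ^ (-(1/2:ℝ)) * (2^N * (v^N)⁻¹) * A * Real.sqrt l
          = (Real.sqrt l * l ^ (-(1/2:ℝ))) * (2^N * (v^N)⁻¹) * A by ring]
      rw [hsl1]
      ring
    have hvL : l⁻¹ * L' ≤ v := by
      have := mul_le_mul_of_nonneg_left h2 hl1.le
      rw [hv]
      linarith
    have hvinv : v⁻¹ ≤ l / L' := by
      have h0 : (0:ℝ) < l⁻¹ * L' := by positivity
      calc v⁻¹ ≤ (l⁻¹ * L')⁻¹ := inv_anti₀ h0 hvL
        _ = l / L' := by rw [mul_inv, inv_inv]; ring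
    have hsplit : (v^N)⁻¹ ≤ (l/L') * (v^(N-1))⁻¹ := by
      have hNe : v^N = v^(N-1) * v := by
        rw [← pow_succ]
        congr 1
        omega
      rw [hNe, mul_inv]
      rw [mul_comm ((v^(N-1))⁻¹) (v⁻¹)]
      exact mul_le_mul_of_nonneg_right hvinv hZpos.le
    have hminr : min (L' * l⁻¹) (l / L') = l / L' := by
      apply min_eq_right
      have e3 : L' * l⁻¹ = L' / l := by ring
      rw [e3, div_le_div_iff₀ hL' hl]
      nlinarith
    calc ‖∫ x, f x * ((φ x : ℝ):ℂ)‖ * Real.sqrt l ≤ B * A * Real.sqrt l := hstep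
      _ = 2^N * (v^N)⁻¹ * A := heq
      _ ≤ 2^N * ((l/L') * (v^(N-1))⁻¹) * A := by
          apply mul_le_mul_of_nonneg_right _ hA0
          exact mul_le_mul_of_nonneg_left hsplit (by positivity)
      _ = 2^N * min (L' * l⁻¹) (l / L') * (v^(N-1))⁻¹ * A := by rw [hminr]; ring
      _ ≤ 2^(N+1) * min (L' * l⁻¹) (l / L') * (v^(N-1))⁻¹ * A := by
          apply mul_le_mul_of_nonneg_right _ hA0
          apply mul_le_mul_of_nonneg_right _ hZpos.le
          apply mul_le_mul_of_nonneg_right _ hmin0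
          norm_num
          exact pow_le_pow_right₀ (by norm_num) (Nat.le_succ N)
lemma geom_lemma (I : DyadicI) (c' L' : ℝ) (hL' : 0 < L')
    (hI : ¬ I.toSet ⊆ Set.Icc (c' - 3 * L' / 2) (c' + 3 * L' / 2))
    (hsmall : I.len ≤ L'/2) : L' ≤ |I.center - c'| := by
  obtain ⟨y, hy, hynot⟩ := Set.not_subset.mp hI
  obtain ⟨hy1, hy2⟩ := hy
  have hl : (0:ℝ) < (2:ℝ)^I.j := zpow_pos (by norm_num) _
  have hlen : I.len = (2:ℝ)^I.j := rfl
  have hyc : I.len / 2 ≥ |y - I.center| := by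
    rw [hlen]
    unfold DyadicI.center
    apply abs_le.mpr
    constructor <;> nlinarith
  have hyfar : 3*L'/2 ≤ |y - c'| := by
    rw [Set.mem_Icc] at hynot
    push_neg at hynot
    rcases lt_or_ge y (c' - 3 * L' / 2) with h | h
    · have : 3*L'/2 ≤ -(y - c') := by linarith
      linarith [neg_abs_le (y - c'), neg_le_abs (y - c')]
    · have h2 := hynot h
      have : 3*L'/2 ≤ y - c' := by linarith
      linarith [le_abs_self (y - c')]
  have htri : |y - c'| ≤ |y - I.center| + |I.center - c'| := by
    calc |y - c'| = |(y - I.center) + (I.center - c')| := by ring_nf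
      _ ≤ |y - I.center| + |I.center - c'| := abs_add_le _ _
  linarith


def dyadicEquiv : DyadicI ≃ ℤ × ℤ :=
  ⟨fun I => (I.j, I.k), fun p => ⟨p.1, p.2⟩, fun I => rfl, fun p => rfl⟩

section Majorant
variable (N : ℕ) (c' L' : ℝ)

noncomputable def gmaj (I : DyadicI) : ℝ :=
  2^(N+1) * min (L' * I.len⁻¹) (I.len / L') *
    ((1 + I.len⁻¹ * |I.center - c'|) ^ (N-1))⁻¹

lemma gmaj_nonneg (hL' : 0 < L') (I : DyadicI) : 0 ≤ gmaj N c' L' I := by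
  unfold gmaj
  have hl : (0:ℝ) < I.len := zpow_pos (by norm_num) _
  have : 0 ≤ min (L' * I.len⁻¹) (I.len / L') := le_min (by positivity) (by positivity)
  positivity

lemma gmaj_summable (hN : 3 ≤ N) (hL' : 0 < L') :
    Summable (gmaj N c' L') ∧ ∑' I, gmaj N c' L' I ≤ 2^(N+1) * 96 := by
  classical
  set F : ℤ × ℤ → ℝ := fun p => gmaj N c' L' ⟨p.1, p.2⟩ with hF
  set e : DyadicI ≃ ℤ × ℤ := dyadicEquiv with he
  have hge : ∀ p : ℤ × ℤ, F p = gmaj N c' L' ⟨p.1, p.2⟩ := fun p => rfl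
  -- rewrite F (j,k) explicitly
  have hkey : ∀ j k : ℤ, F (j, k) =
      (2^(N+1) * min (L' * ((2:ℝ)^j)⁻¹) ((2:ℝ)^j / L')) *
        ((1 + |(k:ℝ) + (1/2 - ((2:ℝ)^j)⁻¹ * c')|) ^ (N-1))⁻¹ := by
    intro j k
    have hl : (0:ℝ) < (2:ℝ)^j := zpow_pos (by norm_num) _
    have habs : ((2:ℝ)^j)⁻¹ * |((k:ℝ) + 1/2) * (2:ℝ)^j - c'| =
        |(k:ℝ) + (1/2 - ((2:ℝ)^j)⁻¹ * c')| := by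
      have hrw : (k:ℝ) + (1/2 - ((2:ℝ)^j)⁻¹ * c') = ((2:ℝ)^j)⁻¹ * (((k:ℝ)+1/2) * (2:ℝ)^j - c') := by
        field_simp
        ring
      rw [hrw, abs_mul, abs_of_pos (inv_pos.mpr hl)]
    rw [hge]
    unfold gmaj DyadicI.len DyadicI.center
    rw [habs]
  have hCj0 : ∀ j : ℤ, 0 ≤ 2^(N+1) * min (L' * ((2:ℝ)^j)⁻¹) ((2:ℝ)^j / L') := by
    intro j
    have hl : (0:ℝ) < (2:ℝ)^j := zpow_pos (by norm_num) _
    have : 0 ≤ min (L' * ((2:ℝ)^j)⁻¹) ((2:ℝ)^j / L') := le_min (by positivity) (by positivity)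
    positivity
  have hbase : ∀ (θ : ℝ) (k : ℤ), (1:ℝ) ≤ 1 + |(k:ℝ) + θ| := fun θ k => by
    have := abs_nonneg ((k:ℝ) + θ); linarith
  have hcmp : ∀ (θ : ℝ) (k : ℤ),
      (((1:ℝ) + |(k:ℝ) + θ|) ^ (N-1))⁻¹ ≤ ((1 + |(k:ℝ) + θ|)^2)⁻¹ := by
    intro θ k
    apply inv_anti₀ (by positivity)
    exact pow_le_pow_right₀ (hbase θ k) (by omega)
  have hFnn : ∀ p : ℤ × ℤ, 0 ≤ F p := by
    intro p
    rw [hge]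
    exact gmaj_nonneg N c' L' hL' _
  -- column summability
  have hcol : ∀ j : ℤ, Summable (fun k : ℤ => F (j, k)) := by
    intro j
    set θ := 1/2 - ((2:ℝ)^j)⁻¹ * c'
    apply Summable.of_nonneg_of_le (fun k => hFnn (j, k)) (fun k => ?_)
      (((intSummable_theta θ).1).mul_left (2^(N+1) * min (L' * ((2:ℝ)^j)⁻¹) ((2:ℝ)^j / L')))
    rw [hkey]
    exact mul_le_mul_of_nonneg_left (hcmp θ k) (hCj0 j)
  have hcoltsum : ∀ j : ℤ, (∑' k : ℤ, F (j, k)) ≤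
      (2^(N+1) * min (L' * ((2:ℝ)^j)⁻¹) ((2:ℝ)^j / L')) * 16 := by
    intro j
    set θ := 1/2 - ((2:ℝ)^j)⁻¹ * c' with hθ
    calc (∑' k : ℤ, F (j, k))
        ≤ ∑' k : ℤ, (2^(N+1) * min (L' * ((2:ℝ)^j)⁻¹) ((2:ℝ)^j / L')) * ((1 + |(k:ℝ) + θ|)^2)⁻¹ := by
          apply Summable.tsum_le_tsum _ (hcol j)
            (((intSummable_theta θ).1).mul_left _)
          intro k
          rw [hkey]
          exact mul_le_mul_of_nonneg_left (hcmp θ k) (hCj0 j)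
      _ = (2^(N+1) * min (L' * ((2:ℝ)^j)⁻¹) ((2:ℝ)^j / L')) * ∑' k : ℤ, ((1 + |(k:ℝ) + θ|)^2)⁻¹ :=
          tsum_mul_left
      _ ≤ (2^(N+1) * min (L' * ((2:ℝ)^j)⁻¹) ((2:ℝ)^j / L')) * 16 :=
          mul_le_mul_of_nonneg_left (intSummable_theta θ).2 (hCj0 j)
  -- row sums bounded by geometric
  set j₀ : ℤ := ⌊Real.logb 2 L'⌋ with hj₀
  have hrowle : ∀ j : ℤ, (∑' k : ℤ, F (j, k)) ≤ 2^(N+1) * 32 * cg (j - j₀) := by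
    intro j
    calc (∑' k : ℤ, F (j, k)) ≤ (2^(N+1) * min (L' * ((2:ℝ)^j)⁻¹) ((2:ℝ)^j / L')) * 16 :=
          hcoltsum j
      _ ≤ (2^(N+1) * (2 * cg (j - j₀))) * 16 := by
          apply mul_le_mul_of_nonneg_right _ (by norm_num)
          exact mul_le_mul_of_nonneg_left (min_le_cg L' hL' j) (by positivity)
      _ = 2^(N+1) * 32 * cg (j - j₀) := by ring
  have hrow : Summable (fun j : ℤ => ∑' k : ℤ, F (j, k)) := by
    apply Summable.of_nonneg_of_le (fun j => tsum_nonneg (fun k => hFnn (j, k))) hrowle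
    exact (cg_shift_summable j₀).mul_left _
  have hFsummable : Summable F := by
    rw [summable_prod_of_nonneg hFnn]
    exact ⟨hcol, hrow⟩
  have htsumF : ∑' p : ℤ × ℤ, F p ≤ 2^(N+1) * 96 := by
    rw [hFsummable.tsum_prod' hcol]
    calc (∑' j : ℤ, ∑' k : ℤ, F (j, k)) ≤ ∑' j : ℤ, 2^(N+1) * 32 * cg (j - j₀) := by
          apply Summable.tsum_le_tsum hrowle hrow ((cg_shift_summable j₀).mul_left _)
      _ = 2^(N+1) * 32 * ∑' j : ℤ, cg (j - j₀) := tsum_mul_left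
      _ = 2^(N+1) * 32 * ∑' m : ℤ, cg m := by rw [cg_shift_tsum]
      _ ≤ 2^(N+1) * 32 * 3 := by
          apply mul_le_mul_of_nonneg_left cgTsum (by positivity)
      _ = 2^(N+1) * 96 := by ring
  have hcomp : gmaj N c' L' = F ∘ e := rfl
  constructor
  · rw [hcomp]
    exact (e.summable_iff (f := F)).mpr hFsummable
  · rw [hcomp]
    calc ∑' I, (F ∘ e) I = ∑' p, F p := e.tsum_eq F
      _ ≤ 2^(N+1) * 96 := htsumF
end Majorant

end Aux

set_option maxHeartbeats 1600000 in
set_option maxHeartbeats 1000000 in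
lemma per_term (N : ℕ) (hN : 3 ≤ N) (f : ℝ → ℂ) (c' L' : ℝ) (hL' : 0 < L')
    (hf : Integrable f)
    (hsupp : Function.support f ⊆ Set.Icc (c' - L' / 2) (c' + L' / 2))
    (hmean : (∫ x, f x) = 0)
    (φI : ℝ → ℝ) (hφI : ContDiff ℝ (⊤ : ℕ∞) φI) (I : DyadicI)
    (hI : ¬ I.toSet ⊆ Set.Icc (c' - 3 * L' / 2) (c' + 3 * L' / 2))
    (hbd : ∀ n ≤ N, ∀ x : ℝ,
      |iteratedDeriv n φI x| ≤ I.len ^ (-(1/2 : ℝ) - (n : ℝ)) * (1 + I.len⁻¹ * |x - I.center|) ^ (-(N : ℝ))) :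
    ‖∫ x, f x * ((φI x : ℝ) : ℂ)‖ * Real.sqrt I.len ≤ gmaj N c' L' I * ∫ x, ‖f x‖ := by
  have hl : (0:ℝ) < I.len := zpow_pos (by norm_num) _
  have hcase : L'/2 ≤ I.len ∨ (I.len ≤ L'/2 ∧ L' ≤ |I.center - c'|) := by
    rcases le_or_gt (L'/2) I.len with h | h
    · exact Or.inl h
    · exact Or.inr ⟨h.le, geom_lemma I c' L' hL' hI h.le⟩
  have hb := term_bound N hN f c' L' hL' hf hsupp hmean φI hφI I.len I.center hl hbd hcase
  have heq : gmaj N c' L' I * ∫ x, ‖f x‖ = 2^(N+1) * min (L' * I.len⁻¹) (I.len / L') *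
      ((1 + I.len⁻¹ * |I.center - c'|) ^ (N-1))⁻¹ * ∫ x, ‖f x‖ := by
    unfold gmaj
    ring
  rw [heq]
  exact hb

/-- for an integrable, mean-zero function `f` supported in an interval `I'`, the
sum over dyadic intervals `I ⊄ 3I'` of `|⟨f,φ_I⟩|·|I|^{1/2}` is bounded by `C_N‖f‖₁`, where
each `φ_I` is a bump of order `N ≥ 3` adapted to `I` with constant 1. -/
theorem statement5 (N : ℕ) (hN : 3 ≤ N) :
    ∃ C : ℝ, 0 < C ∧
    ∀ (f : ℝ → ℂ) (c' L' : ℝ), 0 < L' →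
      Integrable f →
      Function.support f ⊆ Set.Icc (c' - L' / 2) (c' + L' / 2) →
      (∫ x, f x) = 0 →
      ∀ φ : DyadicI → ℝ → ℝ,
        (∀ I, ContDiff ℝ (⊤ : ℕ∞) (φ I)) →
        (∀ (I : DyadicI), ∀ n ≤ N, ∀ x : ℝ,
          |iteratedDeriv n (φ I) x| ≤
            I.len ^ (-(1/2 : ℝ) - (n : ℝ)) * (1 + I.len⁻¹ * |x - I.center|) ^ (-(N : ℝ))) →
        ∃ s : ℝ,
          HasSum (fun I : {I : DyadicI // ¬ I.toSet ⊆ Set.Icc (c' - 3 * L' / 2) (c' + 3 * L' / 2)} =>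
            ‖∫ x, f x * ((φ I.1 x : ℝ) : ℂ)‖ * Real.sqrt I.1.len) s ∧
          s ≤ C * ∫ x, ‖f x‖ := by
  refine ⟨2^(N+1) * 96, by positivity, ?_⟩
  intro f c' L' hL' hf hsupp hmean φ hφ hφbd
  have hA0 : 0 ≤ ∫ x, ‖f x‖ := integral_nonneg fun x => norm_nonneg _
  obtain ⟨hgsum, hgts⟩ := gmaj_summable N c' L' hN hL'
  have hle : ∀ I : {I : DyadicI // ¬ I.toSet ⊆ Set.Icc (c' - 3 * L' / 2) (c' + 3 * L' / 2)},
      ‖∫ x, f x * ((φ I.1 x : ℝ) : ℂ)‖ * Real.sqrt I.1.len ≤ gmaj N c' L' I.1 * ∫ x, ‖f x‖ :=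
    fun I => per_term N hN f c' L' hL' hf hsupp hmean (φ I.1) (hφ I.1) I.1 I.2 (hφbd I.1)
  have htnn : ∀ I : {I : DyadicI // ¬ I.toSet ⊆ Set.Icc (c' - 3 * L' / 2) (c' + 3 * L' / 2)},
      0 ≤ ‖∫ x, f x * ((φ I.1 x : ℝ) : ℂ)‖ * Real.sqrt I.1.len :=
    fun I => mul_nonneg (norm_nonneg _) (Real.sqrt_nonneg _)
  have hgsub : Summable (fun I : {I : DyadicI // ¬ I.toSet ⊆
      Set.Icc (c' - 3 * L' / 2) (c' + 3 * L' / 2)} => gmaj N c' L' I.1 * ∫ x, ‖f x‖) :=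
    (hgsum.subtype _).mul_right _
  have hts : Summable (fun I : {I : DyadicI // ¬ I.toSet ⊆
      Set.Icc (c' - 3 * L' / 2) (c' + 3 * L' / 2)} =>
      ‖∫ x, f x * ((φ I.1 x : ℝ) : ℂ)‖ * Real.sqrt I.1.len) :=
    Summable.of_nonneg_of_le htnn hle hgsub
  refine ⟨_, hts.hasSum, ?_⟩
  calc ∑' I : {I : DyadicI // ¬ I.toSet ⊆ Set.Icc (c' - 3 * L' / 2) (c' + 3 * L' / 2)},
        ‖∫ x, f x * ((φ I.1 x : ℝ) : ℂ)‖ * Real.sqrt I.1.len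
      ≤ ∑' I : {I : DyadicI // ¬ I.toSet ⊆ Set.Icc (c' - 3 * L' / 2) (c' + 3 * L' / 2)},
        gmaj N c' L' I.1 * ∫ x, ‖f x‖ := Summable.tsum_le_tsum hle hts hgsub
    _ = (∑' I : {I : DyadicI // ¬ I.toSet ⊆ Set.Icc (c' - 3 * L' / 2) (c' + 3 * L' / 2)},
        gmaj N c' L' I.1) * ∫ x, ‖f x‖ := tsum_mul_right
    _ ≤ (∑' I, gmaj N c' L' I) * ∫ x, ‖f x‖ :=
        mul_le_mul_of_nonneg_right
          (Summable.tsum_subtype_le (gmaj N c' L') _ (gmaj_nonneg N c' L' hL') hgsum) hA0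
    _ ≤ 2^(N+1) * 96 * ∫ x, ‖f x‖ := mul_le_mul_of_nonneg_right hgts hA0
end

section
/- Fix k ≥ 0, n ≥ 1 integers, and for each dyadic interval I choose a dyadic interval J(I) with |I| = 2^k |J(I)| and n ≤ diam(I ∪ J(I))/|I| < n+1 (the choice being injective in I for fixed J-scale classes as in the construction). Let I' be a dyadic interval. Then the measure of the union ⋃{J(I) : I dyadic, I ⊆ I'} is at most C·(2^{-k} log₂(n) + 1)·|I'| for an absolute constant C. -/
open Real MeasureTheory

/-!
Split the dyadic `I ⊆ I'` by depth `r`, where `|I| = 2^{-r}|I'|`, and let `R = ⌊log₂ n⌋ + 1`,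
so that `n + 1 ≤ 2^R`. At each depth `r ≤ R` there are `2^r` intervals `I`, each with
`|J(I)| = 2^{-k}|I|`, so together they contribute at most `2^{-k}|I'|`; this gives the
`(R + 1)·2^{-k}|I'|` term. For `r > R`, `diam(I ∪ J(I)) < (n + 1)|I| ≤ |I'|`, so `J(I)` lies in
the interval `3I'`, of measure `3|I'|`.
-/

namespace DyadicI

lemma len_pos (I : DyadicI) : 0 < I.len := zpow_pos two_pos _

lemma toSet_eq_Ico (I : DyadicI) : I.toSet = Set.Ico (I.k * I.len) (I.k * I.len + I.len) := by
  rw [toSet, len, add_one_mul]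

lemma diamUnion_eq_s6 (I J : DyadicI) : I.diamUnion J =
    max (I.k * I.len + I.len) (J.k * J.len + J.len) - min (I.k * I.len) (J.k * J.len) := by
  simp only [diamUnion, len, add_one_mul]

lemma measureReal_toSet (I : DyadicI) : volume.real I.toSet = I.len := by
  rw [toSet_eq_Ico, Real.volume_real_Ico, add_sub_cancel_left, max_eq_left I.len_pos.le]

lemma endpoints_le_of_toSet_subset {I I' : DyadicI} (h : I.toSet ⊆ I'.toSet) :
    I'.k * I'.len ≤ I.k * I.len ∧ I.k * I.len + I.len ≤ I'.k * I'.len + I'.len := by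
  rwa [toSet_eq_Ico, toSet_eq_Ico, Set.Ico_subset_Ico_iff (by linarith [I.len_pos])] at h

lemma j_le_of_toSet_subset {I I' : DyadicI} (h : I.toSet ⊆ I'.toSet) : I.j ≤ I'.j := by
  obtain ⟨hl, hr⟩ := endpoints_le_of_toSet_subset h
  exact (zpow_le_zpow_iff_right₀ one_lt_two).mp (by rw [← len, ← len]; linarith)

lemma k_mem_Ico_of_toSet_subset {I I' : DyadicI} {r : ℕ} (hr : I.j = I'.j - r)
    (h : I.toSet ⊆ I'.toSet) : I.k ∈ Finset.Ico (I'.k * 2 ^ r) ((I'.k + 1) * 2 ^ r) := by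
  obtain ⟨hl, hr'⟩ := endpoints_le_of_toSet_subset h
  have hlen : I'.len = 2 ^ r * I.len := by
    rw [len, len, hr, zpow_sub₀ two_ne_zero, zpow_natCast, mul_div_cancel₀ _ (by positivity)]
  rw [hlen] at hl hr'
  have hpos := I.len_pos
  have hl' : ((I'.k * 2 ^ r : ℤ) : ℝ) ≤ I.k := by push_cast; nlinarith
  have hr'' : ((I.k + 1 : ℤ) : ℝ) ≤ ((I'.k + 1) * 2 ^ r : ℤ) := by push_cast; nlinarith
  exact Finset.mem_Ico.2 ⟨by exact_mod_cast hl', by exact_mod_cast hr''⟩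

lemma toSet_subset_of_diamUnion_lt {I J : DyadicI} {D : ℝ} (h : I.diamUnion J < D) :
    J.toSet ⊆ Set.Ico (I.k * I.len + I.len - D) (I.k * I.len + D) := by
  rw [diamUnion_eq_s6] at h
  rw [toSet_eq_Ico]
  rintro x ⟨hx₁, hx₂⟩
  constructor
  · linarith [le_max_left (I.k * I.len + I.len) (J.k * J.len + J.len),
      min_le_right (I.k * I.len) (J.k * J.len)]
  · linarith [le_max_right (I.k * I.len + I.len) (J.k * J.len + J.len),
      min_le_left (I.k * I.len) (J.k * J.len)]

/-- The interval `3I'`: same centre as `I'`, three times as long. -/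
def triple (I' : DyadicI) : Set ℝ := Set.Ico (I'.k * I'.len - I'.len) (I'.k * I'.len + 2 * I'.len)

lemma measureReal_triple (I' : DyadicI) : volume.real I'.triple = 3 * I'.len := by
  rw [triple, Real.volume_real_Ico, max_eq_left (by linarith [I'.len_pos])]
  ring

/-- The union of the `J(I)` over the `2^r` dyadic intervals `I ⊆ I'` with `|I| = 2^{-r}|I'|`. -/
def depthUnion (J : DyadicI → DyadicI) (I' : DyadicI) (r : ℕ) : Set ℝ :=
  ⋃ i ∈ Finset.Ico (I'.k * 2 ^ r) ((I'.k + 1) * 2 ^ r), (J ⟨I'.j - r, i⟩).toSet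

lemma volume_depthUnion_lt_top (J : DyadicI → DyadicI) (I' : DyadicI) (r : ℕ) :
    volume (depthUnion J I' r) < ⊤ :=
  measure_biUnion_lt_top (Finset.finite_toSet _) fun _ _ => measure_Ico_lt_top

lemma measureReal_depthUnion_le {J : DyadicI → DyadicI} {k : ℕ}
    (hJ : ∀ I, I.len = 2 ^ k * (J I).len) (I' : DyadicI) (r : ℕ) :
    volume.real (depthUnion J I' r) ≤ I'.len / 2 ^ k := by
  have hcard : (Finset.Ico (I'.k * 2 ^ r) ((I'.k + 1) * 2 ^ r)).card = 2 ^ r := by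
    have hsub : (I'.k + 1) * 2 ^ r - I'.k * 2 ^ r = ((2 ^ r : ℕ) : ℤ) := by push_cast; ring
    rw [Int.card_Ico, hsub, Int.toNat_natCast]
  have hlen (i : ℤ) : (J ⟨I'.j - r, i⟩).len = I'.len / 2 ^ r / 2 ^ k := by
    rw [eq_div_iff (by positivity), mul_comm, ← hJ, len, len, zpow_sub₀ two_ne_zero, zpow_natCast]
  calc volume.real (depthUnion J I' r)
      ≤ ∑ i ∈ Finset.Ico (I'.k * 2 ^ r) ((I'.k + 1) * 2 ^ r),
          volume.real (J ⟨I'.j - r, i⟩).toSet :=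
        measureReal_biUnion_finset_le _ _
    _ = I'.len / 2 ^ k := by
        simp only [measureReal_toSet, hlen, Finset.sum_const, hcard, nsmul_eq_mul]
        push_cast
        field_simp

lemma biUnion_subset_depthUnion_union_triple {J : DyadicI → DyadicI} {N : ℝ} {R : ℕ}
    (hN : N ≤ 2 ^ R) (hJ : ∀ I : DyadicI, I.diamUnion (J I) < N * I.len) (I' : DyadicI) :
    ⋃ I ∈ {I : DyadicI | I.toSet ⊆ I'.toSet}, (J I).toSet ⊆
      (⋃ r ∈ Finset.range (R + 1), depthUnion J I' r) ∪ I'.triple := by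
  simp only [Set.iUnion_subset_iff, Set.mem_ofPred_eq]
  intro I hI
  have hj := j_le_of_toSet_subset hI
  by_cases hdepth : I'.j - I.j ≤ R
  · obtain ⟨r, hr⟩ : ∃ r : ℕ, I.j = I'.j - r := ⟨(I'.j - I.j).toNat, by omega⟩
    refine Set.subset_union_of_subset_left ?_ _
    refine (Set.subset_biUnion_of_mem (u := depthUnion J I')
      (Finset.mem_range.2 (show r < R + 1 by omega))).trans' ?_
    exact (Set.subset_biUnion_of_mem (u := fun i : ℤ => (J ⟨I'.j - r, i⟩).toSet)
      (k_mem_Ico_of_toSet_subset hr hI)).trans' (by rw [← hr])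
  · refine Set.subset_union_of_subset_right ?_ _
    have hdeep : 2 ^ R * I.len ≤ I'.len := by
      rw [len, len, ← zpow_natCast, ← zpow_add₀ two_ne_zero]
      exact zpow_le_zpow_right₀ one_le_two (by omega)
    have hsmall : N * I.len ≤ I'.len := by nlinarith [I.len_pos]
    obtain ⟨hl, hr⟩ := endpoints_le_of_toSet_subset hI
    refine (toSet_subset_of_diamUnion_lt ((hJ I).trans_le hsmall)).trans ?_
    exact Set.Ico_subset_Ico (by linarith [I.len_pos]) (by linarith [I.len_pos])

lemma measureReal_biUnion_le {J : DyadicI → DyadicI} {k : ℕ} {N : ℝ} {R : ℕ}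
    (hJlen : ∀ I, I.len = 2 ^ k * (J I).len) (hN : N ≤ 2 ^ R)
    (hJdiam : ∀ I : DyadicI, I.diamUnion (J I) < N * I.len) (I' : DyadicI) :
    volume.real (⋃ I ∈ {I : DyadicI | I.toSet ⊆ I'.toSet}, (J I).toSet) ≤
      (R + 1) * (I'.len / 2 ^ k) + 3 * I'.len := by
  set A := ⋃ r ∈ Finset.range (R + 1), depthUnion J I' r
  have hA : volume.real A ≤ (R + 1) * (I'.len / 2 ^ k) := by
    refine (measureReal_biUnion_finset_le _ _).trans ?_
    refine (Finset.sum_le_sum fun r _ => measureReal_depthUnion_le hJlen I' r).trans ?_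
    simp
  have hfinite : volume (A ∪ I'.triple) ≠ ⊤ :=
    measure_union_ne_top (measure_biUnion_lt_top (Finset.finite_toSet _)
      fun r _ => volume_depthUnion_lt_top J I' r).ne measure_Ico_lt_top.ne
  calc _ ≤ volume.real (A ∪ I'.triple) :=
        measureReal_mono (biUnion_subset_depthUnion_union_triple hN hJdiam I') hfinite
    _ ≤ volume.real A + volume.real I'.triple := measureReal_union_le _ _
    _ ≤ (R + 1) * (I'.len / 2 ^ k) + 3 * I'.len := by rw [measureReal_triple]; linarith

end DyadicI

/-- for an injective assignment `I ↦ J(I)` of dyadic intervals at eccentricity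
`k ≥ 0` and relative distance `n`, the union of the `J(I)` over all `I ⊆ I'` has measure at most
`C·(2^{-k}·log₂(n) + 1)·|I'|`. -/
theorem statement6 :
    ∃ C : ℝ, 0 < C ∧
    ∀ (k n : ℕ), 1 ≤ n →
    ∀ J : DyadicI → DyadicI, Function.Injective J →
      (∀ I : DyadicI, I.len = (2 : ℝ) ^ k * (J I).len) →
      (∀ I : DyadicI, (n : ℝ) ≤ I.diamUnion (J I) / I.len ∧
        I.diamUnion (J I) / I.len < (n : ℝ) + 1) →
      ∀ I' : DyadicI,
        (volume (⋃ I ∈ {I : DyadicI | I.toSet ⊆ I'.toSet}, (J I).toSet)).toReal ≤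
          C * ((2 : ℝ) ^ (-(k : ℝ)) * Real.logb 2 n + 1) * I'.len := by
  refine ⟨5, by norm_num, fun k n hn J _ hJlen hJdiam I' => ?_⟩
  have hR : (n : ℝ) + 1 ≤ 2 ^ (Nat.log 2 n + 1) := by
    exact_mod_cast Nat.lt_pow_succ_log_self one_lt_two n
  have hbound := DyadicI.measureReal_biUnion_le hJlen hR
    (fun I => (div_lt_iff₀ I.len_pos).1 (hJdiam I).2) I'
  have hlog : (Nat.log 2 n : ℝ) ≤ Real.logb 2 n := Real.natLog_le_logb n 2
  have hlog_nonneg : 0 ≤ Real.logb 2 n := Real.logb_nonneg one_lt_two (by exact_mod_cast hn)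
  have hrpow : (2 : ℝ) ^ (-(k : ℝ)) = (2 ^ k)⁻¹ := by
    rw [Real.rpow_neg zero_le_two, Real.rpow_natCast]
  have hinv_pos : (0 : ℝ) < (2 ^ k)⁻¹ := by positivity
  have hinv_le : ((2 : ℝ) ^ k)⁻¹ ≤ 1 := inv_le_one_of_one_le₀ (one_le_pow₀ one_le_two)
  have hL := I'.len_pos
  refine hbound.trans ?_
  rw [hrpow, div_eq_mul_inv]
  push_cast
  nlinarith [mul_nonneg (mul_nonneg hlog_nonneg hinv_pos.le) hL.le,
    mul_le_mul_of_nonneg_right hlog (mul_nonneg hinv_pos.le hL.le),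
    mul_le_mul_of_nonneg_right hinv_le hL.le]
end
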